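/- For the complete graph K_n with hatness function h and guessing function g, the sages have a winning strategy in the hat guessing game ⟨K_n, h, g⟩ if and only if the sum over all vertices v of g(v)/h(v) is at least 1. -/

import Mathlib

/-- A winning strategy in the hat guessing game `⟨G, h, g⟩`: each sage `v` deterministically
outputs at most `g v` guesses depending only on the hat colors of its neighbors, and for
every hat assignment (with `c v < h v`) some sage's guess set contains its own color. -/
def HatWinning {V : Type*} (G : SimpleGraph V) (h g : V → ℕ) : Prop :=
  ∃ σ : V → (V → ℕ) → Finset ℕ,
    (∀ v c c', (∀ u, G.Adj v u → c u = c' u) → σ v c = σ v c') ∧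
    (∀ v c, (σ v c).card ≤ g v) ∧
    ∀ c : V → ℕ, (∀ v, c v < h v) → ∃ v, c v ∈ σ v c

/-- The hat guessing game played by the sages occupying the vertices of `S` only
(the game on the induced subgraph `G[S]`). -/
def HatWinningOn {V : Type*} (G : SimpleGraph V) (S : Set V) (h g : V → ℕ) : Prop :=
  ∃ σ : V → (V → ℕ) → Finset ℕ,
    (∀ v ∈ S, ∀ c c', (∀ u ∈ S, G.Adj v u → c u = c' u) → σ v c = σ v c') ∧
    (∀ v ∈ S, ∀ c, (σ v c).card ≤ g v) ∧
    ∀ c : V → ℕ, (∀ v ∈ S, c v < h v) → ∃ v ∈ S, c v ∈ σ v c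


/-!
Necessity is a counting argument: sage `v` cannot see its own hat, so for each colouring of the
other hats it is right for at most `g v` of its `h v` colours, i.e. on at most `g v / h v` of all
colourings; a winning strategy must cover every colouring.

Sufficiency uses the encoding `S(c) = ∑ u, c u * m u mod H`, where `H = ∏ h` and `m v = H / h v`.
Cut `[0, H)` into consecutive intervals `I v` of lengths `g v * m v`, which is possible when
`∑ g v / h v ≥ 1`. Sage `v` knows `S(c)` up to the term `c v * m v` and guesses every colour that
would put `S(c)` into `I v`. If `t` is the part of the sum that `v` sees, then as `x` runs over
`[0, h v)` the values `x * m v + t mod H` are distinct and congruent modulo `m v`, so at most `g v`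
of them fall into `I v`.
-/

open Finset

section Counting

variable {V : Type*} [Fintype V] [DecidableEq V]

theorem card_le_mul_prod_ne_of_fiber {β : V → Type*} [∀ v, Fintype (β v)]
    [∀ v, DecidableEq (β v)] (s : Finset (∀ v, β v)) (v : V) (k : ℕ)
    (hs : ∀ a ∈ s, #{x ∈ s | ∀ u ≠ v, x u = a u} ≤ k) :
    #s ≤ k * ∏ u : {u // u ≠ v}, Fintype.card (β u) := by
  let restrict : (∀ u, β u) → ∀ u : {u // u ≠ v}, β u := fun x u => x u
  calc #s ≤ k * #(s.image restrict) := by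
        refine card_le_mul_card_image s k fun b hb => ?_
        obtain ⟨a, ha, rfl⟩ := mem_image.1 hb
        convert hs a ha using 3 with x
        simp [restrict, funext_iff]
    _ ≤ k * Fintype.card (∀ u : {u // u ≠ v}, β u) := by gcongr; exact card_le_univ _
    _ = k * ∏ u : {u // u ≠ v}, Fintype.card (β u) := by rw [Fintype.card_pi]

theorem HatWinning.prod_le_sum_mul_prod_ne {G : SimpleGraph V} {h g : V → ℕ}
    (hw : HatWinning G h g) :
    ∏ v, h v ≤ ∑ v, g v * ∏ u : {u // u ≠ v}, h u := by
  obtain ⟨σ, hvis, hcard, hwin⟩ := hw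
  let col : (∀ u, Fin (h u)) → V → ℕ := fun a u => a u
  let W : V → Finset (∀ u, Fin (h u)) := fun v => {a | (a v : ℕ) ∈ σ v (col a)}
  have hW : ∀ v, #(W v) ≤ g v * ∏ u : {u // u ≠ v}, h u := by
    intro v
    simpa using card_le_mul_prod_ne_of_fiber (W v) v (g v) fun a _ => by
      have hsame : ∀ x ∈ {x ∈ W v | ∀ u ≠ v, x u = a u}, σ v (col x) = σ v (col a) :=
        fun x hx => hvis v _ _ fun u hu => by
          simp [col, (mem_filter.1 hx).2 u (G.ne_of_adj hu).symm]
      refine (card_le_card_of_injOn (fun x => (x v : ℕ)) (t := σ v (col a)) ?_ ?_).trans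
        (hcard v _)
      · intro x hx
        rw [← hsame x hx]
        exact (mem_filter.1 (mem_filter.1 hx).1).2
      · intro x hx y hy hxy
        funext u
        by_cases huv : u = v
        · subst huv
          exact Fin.ext hxy
        · rw [(mem_filter.1 hx).2 u huv, (mem_filter.1 hy).2 u huv]
  calc ∏ v, h v = #(univ : Finset (∀ u, Fin (h u))) := by simp
    _ ≤ #(univ.biUnion W) := card_le_card fun a _ => by
        obtain ⟨v, hv⟩ := hwin (col a) fun v => (a v).isLt
        exact mem_biUnion.2 ⟨v, mem_univ v, mem_filter.2 ⟨mem_univ a, hv⟩⟩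
    _ ≤ ∑ v, #(W v) := card_biUnion_le
    _ ≤ ∑ v, g v * ∏ u : {u // u ≠ v}, h u := sum_le_sum fun v _ => hW v

theorem one_le_sum_div_iff_prod_le {K : Type*} [Field K] [LinearOrder K] [IsStrictOrderedRing K]
    {h g : V → ℕ} (hpos : ∀ v, 0 < h v) :
    1 ≤ ∑ v, (g v : K) / h v ↔ ∏ v, h v ≤ ∑ v, g v * ∏ u : {u // u ≠ v}, h u := by
  have hH : (0 : K) < ∏ v, (h v : K) := prod_pos fun v _ => by exact_mod_cast hpos v
  have hfrac : ∀ v, (g v : K) / h v = (g v * ∏ u : {u // u ≠ v}, h u : ℕ) / (∏ v, h v : ℕ) := by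
    intro v
    have hm : (0 : K) < ∏ u : {u // u ≠ v}, (h u : K) :=
      prod_pos fun u _ => by exact_mod_cast hpos u
    rw [Fintype.prod_eq_mul_prod_subtype_ne h v]
    push_cast
    rw [mul_div_mul_right _ _ hm.ne']
  rw [sum_congr rfl fun v _ => hfrac v, ← sum_div, ← Nat.cast_sum,
    one_le_div (by exact_mod_cast hH), Nat.cast_le]

end Counting

section Strategy

theorem Nat.card_le_of_subset_Ico_of_modEq {s : Finset ℕ} {a g m : ℕ} (hm : 0 < m)
    (hs : s ⊆ Ico a (a + g * m)) (hmod : ∀ y ∈ s, ∀ z ∈ s, y ≡ z [MOD m]) : #s ≤ g := by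
  have hbounds : ∀ y ∈ s, a ≤ y ∧ y < a + g * m := fun y hy => mem_Ico.1 (hs hy)
  simpa using card_le_card_of_injOn (fun y => (y - a) / m) (t := range g)
    (fun y hy => by
      rw [coe_range, Set.mem_Iio, Nat.div_lt_iff_lt_mul hm]
      have := hbounds y hy
      omega)
    (fun y hy z hz hyz => by
      obtain ⟨hay, -⟩ := hbounds y hy
      obtain ⟨haz, -⟩ := hbounds z hz
      have hsub : y - a ≡ z - a [MOD m] := by
        refine Nat.ModEq.add_right_cancel' a ?_
        rw [Nat.sub_add_cancel hay, Nat.sub_add_cancel haz]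
        exact hmod y hy z hz
      have := Nat.ext_div_modEq hyz hsub
      omega)

theorem Nat.injOn_mul_add_mod (h m t : ℕ) (hm : 0 < m) :
    Set.InjOn (fun x => (x * m + t) % (h * m)) (range h) := by
  intro x hx y hy hxy
  have : x * m ≡ y * m [MOD h * m] := Nat.ModEq.add_right_cancel' t hxy
  exact (Nat.ModEq.mul_right_cancel' hm.ne' this).eq_of_lt_of_lt (mem_range.1 hx) (mem_range.1 hy)

theorem Nat.mul_add_mod_mul_modEq (x h m t : ℕ) : (x * m + t) % (h * m) ≡ t [MOD m] :=
  ((Nat.mod_modEq _ _).of_mul_left h).trans (by simp [Nat.ModEq])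

theorem card_filter_mul_add_mod_mem_Ico_le (h m t a g : ℕ) (hm : 0 < m) :
    #{x ∈ range h | (x * m + t) % (h * m) ∈ Ico a (a + g * m)} ≤ g := by
  rw [← card_image_of_injOn ((Nat.injOn_mul_add_mod h m t hm).mono (filter_subset _ _))]
  refine Nat.card_le_of_subset_Ico_of_modEq (a := a) hm ?_ ?_
  · intro y hy
    obtain ⟨x, hx, rfl⟩ := mem_image.1 hy
    exact (mem_filter.1 hx).2
  · intro y hy z hz
    obtain ⟨x, -, rfl⟩ := mem_image.1 hy
    obtain ⟨x', -, rfl⟩ := mem_image.1 hz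
    exact (Nat.mul_add_mod_mul_modEq x h m t).trans (Nat.mul_add_mod_mul_modEq x' h m t).symm

theorem exists_mem_Ico_sum_range (L : ℕ → ℕ) {n S : ℕ} (hS : S < ∑ i ∈ range n, L i) :
    ∃ k < n, S ∈ Ico (∑ i ∈ range k, L i) (∑ i ∈ range (k + 1), L i) := by
  induction n with
  | zero => simp at hS
  | succ n ih =>
    by_cases hn : S < ∑ i ∈ range n, L i
    · obtain ⟨k, hk, hmem⟩ := ih hn
      exact ⟨k, by omega, hmem⟩
    · exact ⟨n, n.lt_succ_self, mem_Ico.2 ⟨not_lt.1 hn, hS⟩⟩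

theorem hatWinning_top_of_prod_le_sum {n : ℕ} {h g : Fin n → ℕ} (hpos : ∀ v, 0 < h v)
    (hle : ∏ v, h v ≤ ∑ v, g v * ∏ u : {u // u ≠ v}, h u) : HatWinning ⊤ h g := by
  set m : Fin n → ℕ := fun v => ∏ u : {u // u ≠ v}, h u
  set H := ∏ v, h v
  have hHm : ∀ v, H = h v * m v := fun v => Fintype.prod_eq_mul_prod_subtype_ne h v
  have hm : ∀ v, 0 < m v := fun v => prod_pos fun u _ => hpos u
  let L : ℕ → ℕ := fun i => if hi : i < n then g ⟨i, hi⟩ * m ⟨i, hi⟩ else 0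
  have hL : ∑ i ∈ range n, L i = ∑ v, g v * m v := by
    rw [← Fin.sum_univ_eq_sum_range]
    simp [L]
  let A : ℕ → ℕ := fun k => ∑ i ∈ range k, L i
  let rest : Fin n → (Fin n → ℕ) → ℕ := fun v c => ∑ u : {u // u ≠ v}, c u * m u
  refine ⟨fun v c => {x ∈ range (h v) | (x * m v + rest v c) % H ∈ Ico (A v) (A v + g v * m v)},
    ?_, ?_, ?_⟩
  · intro v c c' hcc
    have : rest v c = rest v c' :=
      Fintype.sum_congr _ _ fun u => by rw [hcc u ((SimpleGraph.top_adj _ _).2 u.2.symm)]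
    simp only [this]
  · intro v c
    rw [hHm v]
    exact card_filter_mul_add_mod_mem_Ico_le _ _ _ _ _ (hm v)
  · intro c hc
    obtain ⟨k, hk, hmem⟩ := exists_mem_Ico_sum_range L (S := (∑ u, c u * m u) % H)
      ((Nat.mod_lt _ (prod_pos fun v _ => hpos v)).trans_le (hL ▸ hle))
    refine ⟨⟨k, hk⟩, mem_filter.2 ⟨mem_range.2 (hc _), ?_⟩⟩
    rw [← Fintype.sum_eq_add_sum_subtype_ne (fun u => c u * m u)]
    simpa [sum_range_succ, L, hk] using hmem

end Strategy

theorem clique_winning_iff (n : ℕ) (h g : Fin n → ℕ) (hpos : ∀ v, 0 < h v) :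
    HatWinning (⊤ : SimpleGraph (Fin n)) h g ↔
      1 ≤ ∑ v : Fin n, (g v : ℚ) / (h v : ℚ) := by
  rw [one_le_sum_div_iff_prod_le hpos]
  exact ⟨HatWinning.prod_le_sum_mul_prod_ne, hatWinning_top_of_prod_le_sum hpos⟩
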